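/- arXiv:2302.00007 — 2 statements merged into one kernel-verified Lean document; each statement's English description precedes it below -/
import Mathlib

section
/- Let φ₁ : DihedralGroup 2 →* DihedralGroup 6 be the homomorphism induced by the additive map ZMod 2 → ZMod 6, i ↦ 3i, and φ₂ : DihedralGroup 2 →* DihedralGroup 4 the one induced by i ↦ 2i (both injective). Then there is a group isomorphism Ψ from the amalgamated free product (DihedralGroup 6) *_{DihedralGroup 2} (DihedralGroup 4) (the pushout of φ₁ and φ₂) onto GL(2,ℤ) such that Ψ(ι₁(r 1)) = U, Ψ(ι₂(r 1)) = S, and Ψ(ι₂(sr 0)) = R. (This is the decomposition GL(2,ℤ) ≅ D₁₂ *_{D₄} D₈.) -/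
/-!
`D₁₂` acts on `ℤ²` through `r ↦ U` (of order 6) and `s ↦ R`, `D₈` through `r ↦ S` and `s ↦ R`,
and both actions restrict to the same action `D₄ → {±1, ±R}` of the amalgamated subgroup; this
gives `Ψ : D₁₂ *_{D₄} D₈ → GL(2,ℤ)`. It is onto because `S` and `T = S⁻¹U` generate `SL(2,ℤ)`
and `det R = -1`.

Every element of the amalgamated product is `h · w` with `h ∈ D₄` and `w` a reduced word whose
letters alternate between `D₁₂ ∖ D₄` and `D₈ ∖ D₄`. The off-diagonal entry `⟨g₀, g₁⟩` of the
Gram matrix `g gᵀ` plays ping-pong: `±1` and `±R` fix it, a `D₈`-letter (`±S` or `±RS`) negates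
it, and a `D₁₂`-letter makes it negative whenever it was nonnegative. So a nonempty reduced word
never lands in `{±1, ±R}`, and `Ψ` is injective.
-/

/-- The matrix `S = !![0,-1; 1,0]` as an element of `GL(2,ℤ)`. -/
def S : Matrix.GeneralLinearGroup (Fin 2) ℤ :=
  ⟨!![0, -1; 1, 0], !![0, 1; -1, 0], by decide, by decide⟩

/-- The matrix `U = !![0,-1; 1,1]` as an element of `GL(2,ℤ)`. -/
def U : Matrix.GeneralLinearGroup (Fin 2) ℤ :=
  ⟨!![0, -1; 1, 1], !![1, 1; -1, 0], by decide, by decide⟩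

/-- The matrix `R = !![0,1; 1,0]` as an element of `GL(2,ℤ)`. -/
def R : Matrix.GeneralLinearGroup (Fin 2) ℤ :=
  ⟨!![0, 1; 1, 0], !![0, 1; 1, 0], by decide, by decide⟩

/-- The two factors `D₁₂ = DihedralGroup 6` (at `false`) and `D₈ = DihedralGroup 4`
(at `true`) of the amalgamated free product. -/
def Fac : Bool → Type
  | false => DihedralGroup 6
  | true => DihedralGroup 4

instance instFacGroup : ∀ b, Group (Fac b)
  | false => inferInstanceAs (Group (DihedralGroup 6))
  | true => inferInstanceAs (Group (DihedralGroup 4))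

/-- The family of amalgamating maps `D₄ → D₁₂` and `D₄ → D₈`. -/
def fam (φ₁ : DihedralGroup 2 →* DihedralGroup 6) (φ₂ : DihedralGroup 2 →* DihedralGroup 4) :
    ∀ b, DihedralGroup 2 →* Fac b
  | false => φ₁
  | true => φ₂

open Function Matrix DihedralGroup Monoid

namespace DihedralGroup

theorem hom_ext {n : ℕ} {G : Type*} [Group G] {f g : DihedralGroup n →* G}
    (hr : f (r 1) = g (r 1)) (hsr : f (sr 0) = g (sr 0)) : f = g := by
  have hr' (i : ZMod n) : f (r i) = g (r i) := by
    rw [← ZMod.intCast_zmod_cast i, ← r_one_zpow, map_zpow, map_zpow, hr]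
  ext (i | i)
  · exact hr' i
  · rw [← zero_add i, ← sr_mul_r, map_mul, map_mul, hsr, hr']

end DihedralGroup

theorem Subgroup.IsComplement.eq_one_of_mem_of_mem {G : Type*} [Group G] {S T : Set G}
    (hST : Subgroup.IsComplement S T) (hS : 1 ∈ S) (hT : 1 ∈ T) {g : G} (hgS : g ∈ S)
    (hgT : g ∈ T) : g = 1 := by
  have hself := congrArg Subtype.val (hST.equiv_snd_eq_self_of_mem_of_one_mem hS hgT)
  have hone := congrArg Subtype.val (hST.equiv_snd_eq_one_of_mem_of_one_mem hT hgS)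
  exact hself.symm.trans hone

namespace Monoid.PushoutI

variable {ι : Type*} {G : ι → Type*} {H K : Type*} [∀ i, Group (G i)] [Group H] [Group K]
  {φ : ∀ i, H →* G i}

theorem NormalWord.reduced {d : NormalWord.Transversal φ} (w : NormalWord d) :
    Reduced φ w.toWord := by
  rintro ⟨i, g⟩ hg hmem
  exact w.ne_one _ hg <|
    (d.compl i).eq_one_of_mem_of_mem (one_mem _) (d.one_mem i) hmem (w.normalized i g hg)

theorem lift_comp_ofCoprodI (f : ∀ i, G i →* K) (k : H →* K)
    (hf : ∀ i, (f i).comp (φ i) = k) : (lift f k hf).comp ofCoprodI = CoprodI.lift f :=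
  CoprodI.ext_hom _ _ fun i => by ext; simp [ofCoprodI_of]

theorem lift_injective_of_reduced (hφ : ∀ i, Injective (φ i)) {f : ∀ i, G i →* K}
    {k : H →* K} {hf : ∀ i, (f i).comp (φ i) = k} (hk : Injective k)
    (hred : ∀ w : CoprodI.Word G, Reduced φ w → w ≠ .empty → CoprodI.lift f w.prod ∉ k.range) :
    Injective (lift f k hf) := by
  classical
  obtain ⟨d⟩ := NormalWord.transversal_nonempty φ hφ
  refine (injective_iff_map_eq_one _).2 fun x hx => ?_
  obtain ⟨w, rfl⟩ := (NormalWord.equiv (d := d)).symm.surjective x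
  have hprod : k w.head * CoprodI.lift f w.toWord.prod = 1 := by
    rw [← hx, ← lift_comp_ofCoprodI f k hf]
    simp [NormalWord.equiv, NormalWord.prod]
  by_cases hw : w.toWord = .empty
  · rw [hw, CoprodI.Word.prod_empty, map_one, mul_one, ← map_one k] at hprod
    simp [NormalWord.equiv, NormalWord.prod, hk hprod, hw]
  · refine (hred _ w.reduced hw ⟨w.head⁻¹, ?_⟩).elim
    rw [map_inv, inv_eq_of_mul_eq_one_right hprod]

end Monoid.PushoutI

theorem Matrix.GeneralLinearGroup.dotProduct_row_self_pos {n R : Type*} [Fintype n]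
    [DecidableEq n] [CommRing R] [LinearOrder R] [IsStrictOrderedRing R] (g : GL n R) (i : n) :
    0 < g.1 i ⬝ᵥ g.1 i := by
  refine lt_of_le_of_ne (Finset.sum_nonneg fun j _ => mul_self_nonneg _) (Ne.symm ?_)
  rw [Ne, dotProduct_self_eq_zero]
  intro h
  exact (Matrix.GeneralLinearGroup.det g).ne_zero (det_eq_zero_of_row_eq_zero i (congrFun h))

theorem closure_S_U_R_eq_top : Subgroup.closure {S, U, R} = ⊤ := by
  have hSL : SpecialLinearGroup.toGL.range ≤ Subgroup.closure {S, U, R} := by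
    rw [MonoidHom.range_eq_map, ← SpecialLinearGroup.SL2Z_generators, MonoidHom.map_closure,
      Set.image_pair, Subgroup.closure_le, Set.pair_subset_iff]
    have hS : SpecialLinearGroup.toGL ModularGroup.S = S := Units.ext rfl
    have hT : SpecialLinearGroup.toGL ModularGroup.T = S⁻¹ * U := by decide
    rw [hS, hT]
    exact ⟨Subgroup.subset_closure (by simp),
      mul_mem (inv_mem (Subgroup.subset_closure (by simp))) (Subgroup.subset_closure (by simp))⟩
  refine eq_top_iff.2 fun g _ => ?_
  rcases Int.isUnit_iff.1 (Matrix.GeneralLinearGroup.det g).isUnit with hg | hg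
  · exact hSL ⟨⟨g, hg⟩, Units.ext rfl⟩
  · have hRg : (R * g).1.det = 1 := by
      rw [Units.val_mul, det_mul, show R.1.det = -1 by decide, show g.1.det = -1 from hg]
      rfl
    have hR : R ∈ Subgroup.closure {S, U, R} := Subgroup.subset_closure (by simp)
    have hRg_mem : R * g ∈ Subgroup.closure {S, U, R} := hSL ⟨⟨_, hRg⟩, Units.ext rfl⟩
    simpa [← mul_assoc, show R * R = 1 by decide] using mul_mem hR hRg_mem

def ι₆ : DihedralGroup 2 →* DihedralGroup 6 :=
  MonoidHom.mk' (fun | r i => r (3 * i.val) | sr i => sr (3 * i.val)) (by decide)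

def ι₄ : DihedralGroup 2 →* DihedralGroup 4 :=
  MonoidHom.mk' (fun | r i => r (2 * i.val) | sr i => sr (2 * i.val)) (by decide)

def ρ₆ : DihedralGroup 6 →* GL (Fin 2) ℤ :=
  MonoidHom.mk' (fun | r i => U ^ i.val | sr i => R * U ^ i.val) (by decide)

def ρ₄ : DihedralGroup 4 →* GL (Fin 2) ℤ :=
  MonoidHom.mk' (fun | r i => S ^ i.val | sr i => R * S ^ i.val) (by decide)

def ρ : ∀ b, Fac b →* GL (Fin 2) ℤ
  | false => ρ₆
  | true => ρ₄

theorem ρ_comp_fam : ∀ b, (ρ b).comp (fam ι₆ ι₄ b) = ρ₄.comp ι₄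
  | false => DihedralGroup.hom_ext (by decide) (by decide)
  | true => rfl

def rowDot (g : GL (Fin 2) ℤ) : ℤ := g.1 0 ⬝ᵥ g.1 1

def rowDotCoeffs (x : GL (Fin 2) ℤ) : ℤ × ℤ × ℤ :=
  (x.1 0 0 * x.1 1 0, x.1 0 0 * x.1 1 1 + x.1 0 1 * x.1 1 0, x.1 0 1 * x.1 1 1)

theorem rowDot_one : rowDot 1 = 0 := by
  decide

theorem rowDot_mul (x g : GL (Fin 2) ℤ) :
    rowDot (x * g) = (rowDotCoeffs x).1 * (g.1 0 ⬝ᵥ g.1 0) + (rowDotCoeffs x).2.1 * rowDot g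
      + (rowDotCoeffs x).2.2 * (g.1 1 ⬝ᵥ g.1 1) := by
  simp only [rowDot, rowDotCoeffs, Units.val_mul, dotProduct, Fin.sum_univ_two, mul_apply]
  ring

theorem rowDot_mul_of_rowDotCoeffs {x : GL (Fin 2) ℤ} {c : ℤ} (hx : rowDotCoeffs x = (0, c, 0))
    (g : GL (Fin 2) ℤ) : rowDot (x * g) = c * rowDot g := by
  simp [rowDot_mul, hx]

theorem rowDot_mul_lt_zero {x g : GL (Fin 2) ℤ}
    (hx : rowDotCoeffs x = (0, -1, -1) ∨ rowDotCoeffs x = (-1, -1, 0)) (hg : 0 ≤ rowDot g) :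
    rowDot (x * g) < 0 := by
  have h₀ := g.dotProduct_row_self_pos 0
  have h₁ := g.dotProduct_row_self_pos 1
  rcases hx with hx | hx <;> rw [rowDot_mul, hx] <;> dsimp only <;> linarith

theorem rowDotCoeffs_ρ₆_of_notMem : ∀ a ∉ ι₆.range,
    rowDotCoeffs (ρ₆ a) = (0, -1, -1) ∨ rowDotCoeffs (ρ₆ a) = (-1, -1, 0) := by
  decide

theorem rowDotCoeffs_ρ₄_of_notMem : ∀ a ∉ ι₄.range, rowDotCoeffs (ρ₄ a) = (0, -1, 0) := by
  decide

theorem rowDot_ρ₄_ι₄ : ∀ h, rowDot (ρ₄ (ι₄ h)) = 0 := by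
  decide

theorem ρ₄_notMem_range_of_notMem : ∀ a ∉ ι₄.range, ρ₄ a ∉ (ρ₄.comp ι₄).range := by
  decide

theorem ρ₄_comp_ι₄_injective : Injective (ρ₄.comp ι₄) := by
  unfold Injective
  decide

def pingPong : Option Bool → Set (GL (Fin 2) ℤ)
  | none => {1}
  | some false => {g | rowDot g < 0}
  | some true => {g | 0 ≤ rowDot g ∧ g ∉ (ρ₄.comp ι₄).range}

theorem lift_prod_mem_pingPong (w : CoprodI.Word Fac) (hw : PushoutI.Reduced (fam ι₆ ι₄) w) :
    CoprodI.lift ρ w.prod ∈ pingPong w.fstIdx := by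
  classical
  induction w using CoprodI.Word.consRecOn with
  | empty => exact map_one _
  | cons i a w hidx _ ih =>
    have ha : a ∉ (fam ι₆ ι₄ i).range := hw _ List.mem_cons_self
    have hQ := ih fun l hl => hw l (List.mem_cons_of_mem _ hl)
    clear hw ih
    rw [CoprodI.Word.prod_cons, map_mul, CoprodI.lift_of, CoprodI.Word.fstIdx_cons]
    generalize CoprodI.lift ρ w.prod = Q at hQ
    generalize w.fstIdx = o at hidx hQ
    cases i with
    | false =>
      refine rowDot_mul_lt_zero (rowDotCoeffs_ρ₆_of_notMem a ha) ?_
      rcases o with _ | _ | _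
      · rw [Set.mem_singleton_iff.1 hQ, rowDot_one]
      · exact absurd rfl hidx
      · exact hQ.1
    | true =>
      change a ∉ ι₄.range at ha
      change ρ₄ a * Q ∈ pingPong (some true)
      have hneg : rowDot (ρ₄ a * Q) = -rowDot Q := by
        rw [rowDot_mul_of_rowDotCoeffs (rowDotCoeffs_ρ₄_of_notMem a ha), neg_one_mul]
      rcases o with _ | _ | _
      · rw [Set.mem_singleton_iff.1 hQ] at hneg ⊢
        refine ⟨by rw [hneg, rowDot_one, neg_zero], ?_⟩
        rw [mul_one]
        exact ρ₄_notMem_range_of_notMem a ha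
      · change rowDot Q < 0 at hQ
        refine ⟨by omega, fun ⟨h, hh⟩ => ?_⟩
        have h0 := rowDot_ρ₄_ι₄ h
        rw [← MonoidHom.comp_apply, hh, hneg] at h0
        omega
      · exact absurd rfl hidx

theorem lift_prod_notMem_range (w : CoprodI.Word Fac) (hw : PushoutI.Reduced (fam ι₆ ι₄) w)
    (hne : w ≠ .empty) : CoprodI.lift ρ w.prod ∉ (ρ₄.comp ι₄).range := by
  classical
  induction w using CoprodI.Word.consRecOn with
  | empty => exact absurd rfl hne
  | cons i a w hidx ha _ =>
    have hP := lift_prod_mem_pingPong _ hw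
    rw [CoprodI.Word.fstIdx_cons] at hP
    cases i
    · rintro ⟨h, hh⟩
      have hneg : rowDot _ < 0 := hP
      rw [← hh, MonoidHom.comp_apply, rowDot_ρ₄_ι₄] at hneg
      exact hneg.false
    · exact hP.2

def pushoutToGL : PushoutI (fam ι₆ ι₄) →* GL (Fin 2) ℤ :=
  PushoutI.lift ρ (ρ₄.comp ι₄) ρ_comp_fam

theorem pushoutToGL_of (b : Bool) (a : Fac b) : pushoutToGL (PushoutI.of b a) = ρ b a :=
  PushoutI.lift_of _ _ _ _

theorem pushoutToGL_of_r_one_false : pushoutToGL (PushoutI.of false (r 1)) = U :=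
  (pushoutToGL_of false (r 1)).trans (by decide)

theorem pushoutToGL_of_r_one_true : pushoutToGL (PushoutI.of true (r 1)) = S :=
  (pushoutToGL_of true (r 1)).trans (by decide)

theorem pushoutToGL_of_sr_zero_true : pushoutToGL (PushoutI.of true (sr 0)) = R :=
  (pushoutToGL_of true (sr 0)).trans (by decide)

theorem fam_ι₆_ι₄_injective : ∀ b, Injective (fam ι₆ ι₄ b)
  | false => show Injective ι₆ by unfold Injective; decide
  | true => show Injective ι₄ by unfold Injective; decide

theorem pushoutToGL_injective : Injective pushoutToGL :=
  PushoutI.lift_injective_of_reduced fam_ι₆_ι₄_injective ρ₄_comp_ι₄_injective lift_prod_notMem_range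

theorem pushoutToGL_surjective : Surjective pushoutToGL := by
  rw [← MonoidHom.range_eq_top, eq_top_iff, ← closure_S_U_R_eq_top, Subgroup.closure_le]
  rintro _ (rfl | rfl | rfl)
  exacts [⟨_, pushoutToGL_of_r_one_true⟩, ⟨_, pushoutToGL_of_r_one_false⟩,
    ⟨_, pushoutToGL_of_sr_zero_true⟩]

theorem gl2z_is_amalgamated_product_general
    (f₁ : ZMod 2 →+ ZMod 6) (f₂ : ZMod 2 →+ ZMod 4)
    (hf₁ : f₁ 1 = 3) (hf₂ : f₂ 1 = 2)
    (φ₁ : DihedralGroup 2 →* DihedralGroup 6) (φ₂ : DihedralGroup 2 →* DihedralGroup 4)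
    (hφ₁r : ∀ i : ZMod 2, φ₁ (DihedralGroup.r i) = DihedralGroup.r (f₁ i))
    (hφ₁sr : ∀ i : ZMod 2, φ₁ (DihedralGroup.sr i) = DihedralGroup.sr (f₁ i))
    (hφ₂r : ∀ i : ZMod 2, φ₂ (DihedralGroup.r i) = DihedralGroup.r (f₂ i))
    (hφ₂sr : ∀ i : ZMod 2, φ₂ (DihedralGroup.sr i) = DihedralGroup.sr (f₂ i)) :
    ∃ Ψ : Monoid.PushoutI (fam φ₁ φ₂) ≃* Matrix.GeneralLinearGroup (Fin 2) ℤ,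
      Ψ (Monoid.PushoutI.of (φ := fam φ₁ φ₂) false (DihedralGroup.r 1)) = U ∧
      Ψ (Monoid.PushoutI.of (φ := fam φ₁ φ₂) true (DihedralGroup.r 1)) = S ∧
      Ψ (Monoid.PushoutI.of (φ := fam φ₁ φ₂) true (DihedralGroup.sr 0)) = R := by
  obtain rfl : φ₁ = ι₆ :=
    DihedralGroup.hom_ext (by rw [hφ₁r, hf₁]; rfl) (by rw [hφ₁sr, map_zero]; rfl)
  obtain rfl : φ₂ = ι₄ :=
    DihedralGroup.hom_ext (by rw [hφ₂r, hf₂]; rfl) (by rw [hφ₂sr, map_zero]; rfl)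
  exact ⟨.ofBijective pushoutToGL ⟨pushoutToGL_injective, pushoutToGL_surjective⟩,
    pushoutToGL_of_r_one_false, pushoutToGL_of_r_one_true, pushoutToGL_of_sr_zero_true⟩

/-- `GL(2,ℤ)` is the amalgamated free product `D₁₂ *_{D₄} D₈`, amalgamated along the
homomorphisms induced by the additive maps `ZMod 2 → ZMod 6, i ↦ 3i` and
`ZMod 2 → ZMod 4, i ↦ 2i`, via an isomorphism sending `r 1` of `D₁₂` to `U`,
`r 1` of `D₈` to `S`, and `sr 0` of `D₈` to `R`. -/
theorem gl2z_is_amalgamated_product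
    (f₁ : ZMod 2 →+ ZMod 6) (f₂ : ZMod 2 →+ ZMod 4)
    (hf₁ : f₁ 1 = 3) (hf₂ : f₂ 1 = 2)
    (φ₁ : DihedralGroup 2 →* DihedralGroup 6) (φ₂ : DihedralGroup 2 →* DihedralGroup 4)
    (hφ₁ : Function.Injective φ₁) (hφ₂ : Function.Injective φ₂)
    (hφ₁r : ∀ i : ZMod 2, φ₁ (DihedralGroup.r i) = DihedralGroup.r (f₁ i))
    (hφ₁sr : ∀ i : ZMod 2, φ₁ (DihedralGroup.sr i) = DihedralGroup.sr (f₁ i))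
    (hφ₂r : ∀ i : ZMod 2, φ₂ (DihedralGroup.r i) = DihedralGroup.r (f₂ i))
    (hφ₂sr : ∀ i : ZMod 2, φ₂ (DihedralGroup.sr i) = DihedralGroup.sr (f₂ i)) :
    ∃ Ψ : Monoid.PushoutI (fam φ₁ φ₂) ≃* Matrix.GeneralLinearGroup (Fin 2) ℤ,
      Ψ (Monoid.PushoutI.of (φ := fam φ₁ φ₂) false (DihedralGroup.r 1)) = U ∧
      Ψ (Monoid.PushoutI.of (φ := fam φ₁ φ₂) true (DihedralGroup.r 1)) = S ∧
      Ψ (Monoid.PushoutI.of (φ := fam φ₁ φ₂) true (DihedralGroup.sr 0)) = R :=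
  gl2z_is_amalgamated_product_general f₁ f₂ hf₁ hf₂ φ₁ φ₂ hφ₁r hφ₁sr hφ₂r hφ₂sr
end

section
/- The map DihedralGroup 8 → GL⁺(2,ℤ) sending r i ↦ ŝ^i and sr i ↦ r̂·ŝ^i (exponents taken via any integer representative of i ∈ ZMod 8; well defined since ŝ⁸ = 1) is an injective group homomorphism. Hence ŝ and r̂ generate a subgroup of GL⁺(2,ℤ) isomorphic to the dihedral group of order 16. -/
/-- The three generators `û`, `ŝ`, `r̂` of the Pin⁺ cover of `GL(2,ℤ)`. -/
inductive GLGen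
  | u | s | r

/-- The relators `ŝ⁸`, `r̂²`, `r̂ŝr̂⁻¹ŝ`, `r̂ûr̂⁻¹û`, `ŝ²û⁻³`. -/
def glRels : Set (FreeGroup GLGen) :=
  { (FreeGroup.of GLGen.s) ^ 8,
    (FreeGroup.of GLGen.r) ^ 2,
    FreeGroup.of GLGen.r * FreeGroup.of GLGen.s * (FreeGroup.of GLGen.r)⁻¹ * FreeGroup.of GLGen.s,
    FreeGroup.of GLGen.r * FreeGroup.of GLGen.u * (FreeGroup.of GLGen.r)⁻¹ * FreeGroup.of GLGen.u,
    (FreeGroup.of GLGen.s) ^ 2 * ((FreeGroup.of GLGen.u) ^ 3)⁻¹ }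

/-- The Pin⁺ cover `GL⁺(2,ℤ)` of `GL(2,ℤ)`. -/
abbrev GLplus : Type := PresentedGroup glRels

/-- The generator `û` of `GL⁺(2,ℤ)`. -/
def uhat : GLplus := PresentedGroup.of GLGen.u

/-- The generator `ŝ` of `GL⁺(2,ℤ)`. -/
def shat : GLplus := PresentedGroup.of GLGen.s

/-- The generator `r̂` of `GL⁺(2,ℤ)`. -/
def rhat : GLplus := PresentedGroup.of GLGen.r

/-!
`ŝ` and `r̂` satisfy the dihedral relations `ŝ⁸ = r̂² = 1`, `r̂ŝr̂⁻¹ = ŝ⁻¹`, so the universal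
property of `D₁₆` gives the homomorphism. It is injective because it has a left inverse:
`û ↦ r 6`, `ŝ ↦ r 1`, `r̂ ↦ sr 0` respects all relators of `GL⁺(2,ℤ)` (the only non-dihedral
one, `ŝ² = û³`, holds since `3 · 6 ≡ 2 mod 8`), so it defines a retraction `GL⁺(2,ℤ) → D₁₆`.
-/

section PowZModVal

variable {G : Type*} [Group G] {n : ℕ} [NeZero n] {a b : G}

theorem pow_val_add_of_pow_eq_one (ha : a ^ n = 1) (i j : ZMod n) :
    a ^ (i + j).val = a ^ i.val * a ^ j.val := by
  rw [ZMod.val_add, ← pow_eq_pow_mod _ ha, pow_add]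

theorem pow_val_neg_of_pow_eq_one (ha : a ^ n = 1) (i : ZMod n) :
    a ^ (-i).val = (a ^ i.val)⁻¹ :=
  eq_inv_of_mul_eq_one_left <| by
    rw [← pow_val_add_of_pow_eq_one ha, neg_add_cancel, ZMod.val_zero, pow_zero]

theorem pow_val_mul_of_conj_eq_inv (ha : a ^ n = 1) (hb : b ^ 2 = 1) (hab : b * a * b⁻¹ = a⁻¹)
    (i : ZMod n) : a ^ i.val * b = b * a ^ (-i).val := by
  have hb_inv : b⁻¹ = b := inv_eq_of_mul_eq_one_right (by rwa [← sq])
  rw [pow_val_neg_of_pow_eq_one ha, ← inv_pow, ← hab, conj_pow, hb_inv, ← mul_assoc,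
    ← mul_assoc, ← sq, hb, one_mul]

end PowZModVal

namespace DihedralGroup

variable {G : Type*} [Group G] {n : ℕ} [NeZero n] {a b : G}

def lift (ha : a ^ n = 1) (hb : b ^ 2 = 1) (hab : b * a * b⁻¹ = a⁻¹) :
    DihedralGroup n →* G where
  toFun
    | r i => a ^ i.val
    | sr i => b * a ^ i.val
  map_one' := by
    show a ^ (0 : ZMod n).val = 1
    rw [ZMod.val_zero, pow_zero]
  map_mul' := by
    have hadd := pow_val_add_of_pow_eq_one ha
    have hcomm := pow_val_mul_of_conj_eq_inv ha hb hab
    rintro (i | i) (j | j)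
    · exact hadd i j
    · show b * a ^ (j - i).val = a ^ i.val * (b * a ^ j.val)
      rw [← mul_assoc, hcomm, mul_assoc, ← hadd, neg_add_eq_sub]
    · show b * a ^ (i + j).val = b * a ^ i.val * a ^ j.val
      rw [mul_assoc, hadd]
    · show a ^ (j - i).val = b * a ^ i.val * (b * a ^ j.val)
      rw [mul_assoc, ← mul_assoc (a ^ i.val), hcomm, ← mul_assoc, ← mul_assoc, ← sq, hb,
        one_mul, ← hadd, neg_add_eq_sub]

variable (ha : a ^ n = 1) (hb : b ^ 2 = 1) (hab : b * a * b⁻¹ = a⁻¹)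

@[simp]
theorem lift_r (i : ZMod n) : lift ha hb hab (r i) = a ^ i.val := rfl

@[simp]
theorem lift_sr (i : ZMod n) : lift ha hb hab (sr i) = b * a ^ i.val := rfl

theorem range_lift : (lift ha hb hab).range = Subgroup.closure {a, b} := by
  have ha_mem : a ∈ Subgroup.closure {a, b} := Subgroup.subset_closure (by simp)
  have hb_mem : b ∈ Subgroup.closure {a, b} := Subgroup.subset_closure (by simp)
  apply le_antisymm
  · rintro _ ⟨i | i, rfl⟩
    · exact pow_mem ha_mem _
    · exact mul_mem hb_mem (pow_mem ha_mem _)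
  · rw [Subgroup.closure_le]
    rintro x (rfl | rfl)
    · refine ⟨r 1, ?_⟩
      rw [lift_r, ZMod.val_one_eq_one_mod, ← pow_eq_pow_mod _ ha, pow_one]
    · exact ⟨sr 0, by rw [lift_sr, ZMod.val_zero, pow_zero, mul_one]⟩

theorem leftInverse_lift {φ : G →* DihedralGroup n} (hφa : φ a = r 1) (hφb : φ b = sr 0) :
    Function.LeftInverse φ (lift ha hb hab) := by
  rintro (i | i)
  · rw [lift_r, map_pow, hφa, r_one_pow, ZMod.natCast_zmod_val]
  · rw [lift_sr, map_mul, map_pow, hφa, hφb, r_one_pow, ZMod.natCast_zmod_val, sr_mul_r,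
      zero_add]

end DihedralGroup

open DihedralGroup

theorem shat_pow_eight : shat ^ 8 = 1 :=
  (map_pow (PresentedGroup.mk glRels) _ 8).symm.trans <|
    PresentedGroup.one_of_mem (x := FreeGroup.of GLGen.s ^ 8) (by simp [glRels])

theorem rhat_sq : rhat ^ 2 = 1 :=
  (map_pow (PresentedGroup.mk glRels) _ 2).symm.trans <|
    PresentedGroup.one_of_mem (x := FreeGroup.of GLGen.r ^ 2) (by simp [glRels])

theorem rhat_mul_shat_mul_rhat_inv : rhat * shat * rhat⁻¹ = shat⁻¹ :=
  eq_inv_of_mul_eq_one_left <| PresentedGroup.one_of_mem (rels := glRels)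
    (x := FreeGroup.of GLGen.r * FreeGroup.of GLGen.s * (FreeGroup.of GLGen.r)⁻¹ *
      FreeGroup.of GLGen.s) (by simp [glRels])

def GLGen.toDihedral : GLGen → DihedralGroup 8
  | .u => DihedralGroup.r 6
  | .s => DihedralGroup.r 1
  | .r => DihedralGroup.sr 0

theorem GLGen.lift_toDihedral_glRels : ∀ x ∈ glRels, FreeGroup.lift GLGen.toDihedral x = 1 := by
  rintro x (rfl | rfl | rfl | rfl | rfl) <;>
    simp only [map_mul, map_pow, map_inv, FreeGroup.lift_apply_of, toDihedral] <;> decide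

def GLplus.toDihedral : GLplus →* DihedralGroup 8 :=
  PresentedGroup.toGroup GLGen.lift_toDihedral_glRels

theorem GLplus.toDihedral_shat : GLplus.toDihedral shat = r 1 :=
  PresentedGroup.toGroup.of _

theorem GLplus.toDihedral_rhat : GLplus.toDihedral rhat = sr 0 :=
  PresentedGroup.toGroup.of _

/-- The map `DihedralGroup 8 → GL⁺(2,ℤ)`, `r i ↦ ŝ^i`, `sr i ↦ r̂·ŝ^i`, is an
injective group homomorphism; hence `ŝ` and `r̂` generate a subgroup of `GL⁺(2,ℤ)`
isomorphic to the dihedral group of order `16`. -/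
theorem dihedral16_embeds_in_glplus :
    ∃ f : DihedralGroup 8 →* GLplus,
      Function.Injective f ∧
      (∀ i : ZMod 8, f (DihedralGroup.r i) = shat ^ i.val) ∧
      (∀ i : ZMod 8, f (DihedralGroup.sr i) = rhat * shat ^ i.val) ∧
      Nonempty (DihedralGroup 8 ≃* (Subgroup.closure ({shat, rhat} : Set GLplus))) := by
  let f := lift shat_pow_eight rhat_sq rhat_mul_shat_mul_rhat_inv
  have hf : Function.Injective f :=
    (leftInverse_lift _ _ _ GLplus.toDihedral_shat GLplus.toDihedral_rhat).injective
  exact ⟨f, hf, lift_r _ _ _, lift_sr _ _ _,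
    ⟨(MonoidHom.ofInjective hf).trans (MulEquiv.subgroupCongr (range_lift _ _ _))⟩⟩
end
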